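/- arXiv:1706.05532 — 2 statements merged into one kernel-verified Lean document; each statement's English description precedes it below -/
import Mathlib

section
/- (Necessity direction of the product condition.) Let W and Z be processes on parties A', B', ... and A'', B'', ... respectively and suppose P = W ⊗ Z is not a valid process for the combined parties. Then P contains a nonzero nontrivial Hilbert–Schmidt term that is in type on no combined party; this term is the tensor product of a nonzero nontrivial term of W and a nonzero nontrivial term of Z, and this pair of terms satisfies: on every combined party where one term is trivial, the other is trivial or includes the out type; and on every combined party where one term is the in type, the other includes the out type. -/
/-!
Positivity, the trace normalisation and the Hilbert–Schmidt expansion all pass to `W ⊗ Z`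
(the coefficient of the product term `t ⊗ s` is `w t * z s`), so `W ⊗ Z` can only fail to be
a process through a nonzero nontrivial term `t ⊗ s` that is in type on no combined party.
A combined party is in type exactly when neither factor has an output index there and one of
them has an input index there; the party-wise constraints on `t` and `s` just unpack this.
If `t` were trivial, `s` would be a nonzero nontrivial term of `Z`, hence in type on some
party, and `t ⊗ s` would be in type there as well; symmetrically for `s`.
-/

open Matrix Kronecker BigOperators
open scoped ComplexOrder

namespace ProcessPaper

/-- A (generalized) Hilbert–Schmidt basis of operators on a finite-dimensional Hilbert
space with orthonormal basis indexed by `n`: a family of Hermitian matrices indexed by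
`ι` (with `Fintype.card ι = (Fintype.card n) ^ 2`), whose distinguished element `σ 0`
is the identity, whose other elements are traceless, which are mutually orthogonal
under the trace inner product, and which are all nonzero. -/
def IsHSBasis {n : Type*} [Fintype n] [DecidableEq n] {ι : Type*} [Fintype ι] [Zero ι]
    (σ : ι → Matrix n n ℂ) : Prop :=
  Fintype.card ι = (Fintype.card n) ^ 2 ∧
  (∀ i, (σ i).IsHermitian) ∧
  σ 0 = 1 ∧
  (∀ i, i ≠ 0 → (σ i).trace = 0) ∧
  (∀ i j, i ≠ j → (σ i * σ j).trace = 0) ∧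
  (∀ i, σ i ≠ 0)

variable {P : Type*} [Fintype P] [DecidableEq P]

section defs

variable {I O : P → Type*} [∀ p, Fintype (I p)] [∀ p, DecidableEq (I p)]
  [∀ p, Fintype (O p)] [∀ p, DecidableEq (O p)]
  {ιI ιO : P → Type*} [∀ p, Fintype (ιI p)] [∀ p, Zero (ιI p)]
  [∀ p, Fintype (ιO p)] [∀ p, Zero (ιO p)]

/-- The tensor product, over all parties, of party-local operators
(each party `p` carries the Hilbert space of its input system `I p`
tensored with its output system `O p`). -/
def tensorFamily (M : ∀ p, Matrix (I p × O p) (I p × O p) ℂ) :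
    Matrix ((p : P) → I p × O p) ((p : P) → I p × O p) ℂ :=
  fun x y => ∏ p, M p (x p) (y p)

/-- The Hilbert–Schmidt basis term with multi-index `t`:
`⨂_p σI p (t p).1 ⊗ σO p (t p).2`. -/
def hsTerm (σI : ∀ p, ιI p → Matrix (I p) (I p) ℂ)
    (σO : ∀ p, ιO p → Matrix (O p) (O p) ℂ)
    (t : ∀ p, ιI p × ιO p) :
    Matrix ((p : P) → I p × O p) ((p : P) → I p × O p) ℂ :=
  fun x y => ∏ p, σI p (t p).1 (x p).1 (y p).1 * σO p (t p).2 (x p).2 (y p).2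

/-- The operator with Hilbert–Schmidt coefficients `w`. -/
noncomputable def expand (σI : ∀ p, ιI p → Matrix (I p) (I p) ℂ)
    (σO : ∀ p, ιO p → Matrix (O p) (O p) ℂ)
    (w : (∀ p, ιI p × ιO p) → ℝ) :
    Matrix ((p : P) → I p × O p) ((p : P) → I p × O p) ℂ :=
  ∑ t : ∀ p, ιI p × ιO p, (w t : ℂ) • hsTerm σI σO t

end defs

section types

variable {ιI ιO : P → Type*} [∀ p, Zero (ιI p)] [∀ p, Zero (ιO p)]

/-- A term is trivial on party `p` if its indices on both the input and the output
system of `p` are zero (identity factor on party `p`). -/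
def TrivialAt (t : ∀ p, ιI p × ιO p) (p : P) : Prop :=
  (t p).1 = 0 ∧ (t p).2 = 0

/-- A term is in type on party `p` if it is nontrivial on the input system of `p`
and trivial (identity) on the output system of `p`. -/
def InTypeAt (t : ∀ p, ιI p × ιO p) (p : P) : Prop :=
  (t p).1 ≠ 0 ∧ (t p).2 = 0

/-- A term includes the out type on party `p` if it is nontrivial on the output
system of `p`. -/
def IncludesOutAt (t : ∀ p, ιI p × ιO p) (p : P) : Prop :=
  (t p).2 ≠ 0

/-- A term is nontrivial if it is nontrivial on some party
(i.e. it is not the identity term). -/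
def NontrivialTerm (t : ∀ p, ιI p × ιO p) : Prop :=
  ∃ p, ¬ TrivialAt t p

/-- The Oreshkov–Giarmatzi condition on Hilbert–Schmidt coefficients: every nonzero
nontrivial term is in type on at least one party. -/
def OGCoeffs (w : (∀ p, ιI p × ιO p) → ℝ) : Prop :=
  ∀ t, w t ≠ 0 → NontrivialTerm t → ∃ p, InTypeAt t p

end types

section process

variable {I O : P → Type*} [∀ p, Fintype (I p)] [∀ p, DecidableEq (I p)]
  [∀ p, Fintype (O p)] [∀ p, DecidableEq (O p)]
  {ιI ιO : P → Type*} [∀ p, Fintype (ιI p)] [∀ p, Zero (ιI p)]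
  [∀ p, Fintype (ιO p)] [∀ p, Zero (ιO p)]

/-- `W` is a valid process with Hilbert–Schmidt coefficients `w` (relative to the
Hilbert–Schmidt bases `σI`, `σO`): it is positive semidefinite, has trace equal to the
product `d_O` of the output dimensions, has expansion given by `w`, and every nonzero
nontrivial Hilbert–Schmidt term of it is in type on at least one party. -/
def IsProcessWith (σI : ∀ p, ιI p → Matrix (I p) (I p) ℂ)
    (σO : ∀ p, ιO p → Matrix (O p) (O p) ℂ)
    (W : Matrix ((p : P) → I p × O p) ((p : P) → I p × O p) ℂ)
    (w : (∀ p, ιI p × ιO p) → ℝ) : Prop :=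
  W.PosSemidef ∧
  W.trace = ∏ p, (Fintype.card (O p) : ℂ) ∧
  W = expand σI σO w ∧
  OGCoeffs w

/-- `W` is a valid process (relative to the Hilbert–Schmidt bases `σI`, `σO`). -/
def IsProcess (σI : ∀ p, ιI p → Matrix (I p) (I p) ℂ)
    (σO : ∀ p, ιO p → Matrix (O p) (O p) ℂ)
    (W : Matrix ((p : P) → I p × O p) ((p : P) → I p × O p) ℂ) : Prop :=
  ∃ w, IsProcessWith σI σO W w

end process

section product

variable {I' O' I'' O'' : P → Type*}

/-- The tensor product `P = W ⊗ Z` of an operator `W` for parties `A', B', …` and an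
operator `Z` for parties `A'', B'', …`, regarded as an operator for the combined
parties `A = A'A''` (input `a₁ = a₁'a₁''`, output `a₂ = a₂'a₂''`), `B = B'B''`, …. -/
def prodOp (W : Matrix ((p : P) → I' p × O' p) ((p : P) → I' p × O' p) ℂ)
    (Z : Matrix ((p : P) → I'' p × O'' p) ((p : P) → I'' p × O'' p) ℂ) :
    Matrix ((p : P) → (I' p × I'' p) × (O' p × O'' p))
      ((p : P) → (I' p × I'' p) × (O' p × O'' p)) ℂ :=
  fun x y =>
    W (fun p => ((x p).1.1, (x p).2.1)) (fun p => ((y p).1.1, (y p).2.1)) *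
    Z (fun p => ((x p).1.2, (x p).2.2)) (fun p => ((y p).1.2, (y p).2.2))

end product

/-- The Hilbert–Schmidt basis of a combined system, consisting of the tensor (Kronecker)
products of the basis elements of the two subsystems; its distinguished (identity)
element is the product of the two distinguished elements. -/
def prodBasis {n n' ι ι' : Type*} (σ : ι → Matrix n n ℂ) (σ' : ι' → Matrix n' n' ℂ) :
    ι × ι' → Matrix (n × n') (n × n') ℂ :=
  fun i => σ i.1 ⊗ₖ σ' i.2

section coeffs

variable {ιI' ιO' ιI'' ιO'' : P → Type*}

/-- The Hilbert–Schmidt coefficients of a tensor product `W ⊗ Z` in terms of the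
coefficients `w` of `W` and `z` of `Z`. -/
def prodCoeffs (w : (∀ p, ιI' p × ιO' p) → ℝ) (z : (∀ p, ιI'' p × ιO'' p) → ℝ) :
    (∀ p, (ιI' p × ιI'' p) × (ιO' p × ιO'' p)) → ℝ :=
  fun u => w (fun p => ((u p).1.1, (u p).2.1)) * z (fun p => ((u p).1.2, (u p).2.2))

/-- The multi-index of the tensor product of the term `t` of `W` and the term `s`
of `Z`, as a term for the combined parties. -/
def combineTerm (t : ∀ p, ιI' p × ιO' p) (s : ∀ p, ιI'' p × ιO'' p) :
    ∀ p, (ιI' p × ιI'' p) × (ιO' p × ιO'' p) :=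
  fun p => (((t p).1, (s p).1), ((t p).2, (s p).2))

end coeffs

section twoparty

variable {ιI ιO : Fin 2 → Type*} [∀ p, Zero (ιI p)] [∀ p, Zero (ιO p)]

/-- For two parties `A` (party `0`) and `B` (party `1`), an `A` to `B` signalling
term: a term of type `a₂b₁` or `a₁a₂b₁`, i.e. nontrivial on `a₂` and on `b₁` and
trivial on `b₂`. -/
def AtoBSig (t : ∀ p, ιI p × ιO p) : Prop :=
  (t 0).2 ≠ 0 ∧ (t 1).1 ≠ 0 ∧ (t 1).2 = 0

/-- A `B` to `A` signalling term: a term of type `a₁b₂` or `a₁b₁b₂`, i.e. nontrivial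
on `b₂` and on `a₁` and trivial on `a₂`. -/
def BtoASig (t : ∀ p, ιI p × ιO p) : Prop :=
  (t 1).2 ≠ 0 ∧ (t 0).1 ≠ 0 ∧ (t 0).2 = 0

end twoparty

section ProductOperator

variable {P : Type*} {I' O' I'' O'' : P → Type*}
  (W : Matrix ((p : P) → I' p × O' p) ((p : P) → I' p × O' p) ℂ)
  (Z : Matrix ((p : P) → I'' p × O'' p) ((p : P) → I'' p × O'' p) ℂ)

def tensorIndexEquiv : (∀ p, (I' p × I'' p) × (O' p × O'' p)) ≃
    (∀ p, I' p × O' p) × (∀ p, I'' p × O'' p) where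
  toFun x := (fun p => ((x p).1.1, (x p).2.1), fun p => ((x p).1.2, (x p).2.2))
  invFun y p := (((y.1 p).1, (y.2 p).1), ((y.1 p).2, (y.2 p).2))
  left_inv _ := rfl
  right_inv _ := rfl

theorem prodOp_eq_submatrix :
    prodOp W Z = (W ⊗ₖ Z).submatrix tensorIndexEquiv tensorIndexEquiv :=
  rfl

theorem prodOp_sum_smul_sum {ι κ : Type*} [Fintype ι] [Fintype κ] (a : ι → ℂ) (b : κ → ℂ)
    (A : ι → Matrix ((p : P) → I' p × O' p) ((p : P) → I' p × O' p) ℂ)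
    (B : κ → Matrix ((p : P) → I'' p × O'' p) ((p : P) → I'' p × O'' p) ℂ) :
    prodOp (∑ i, a i • A i) (∑ j, b j • B j) = ∑ i, ∑ j, (a i * b j) • prodOp (A i) (B j) := by
  ext x y
  simp only [prodOp, Matrix.sum_apply, Matrix.smul_apply, smul_eq_mul, Finset.sum_mul_sum]
  exact Finset.sum_congr rfl fun i _ => Finset.sum_congr rfl fun j _ => mul_mul_mul_comm ..

variable [Fintype P]
  [∀ p, Fintype (I' p)] [∀ p, Fintype (O' p)] [∀ p, Fintype (I'' p)] [∀ p, Fintype (O'' p)]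

variable {W Z} in
theorem posSemidef_prodOp (hW : W.PosSemidef) (hZ : Z.PosSemidef) : (prodOp W Z).PosSemidef := by
  rw [prodOp_eq_submatrix]
  exact (hW.kronecker hZ).submatrix _

theorem trace_prodOp [DecidableEq P] : (prodOp W Z).trace = W.trace * Z.trace := by
  rw [← trace_kronecker, prodOp_eq_submatrix]
  exact Equiv.sum_comp tensorIndexEquiv fun y => (W ⊗ₖ Z) y y

end ProductOperator

section ProductExpansion

variable {P : Type*} {I' O' I'' O'' : P → Type*}
  {ιI' ιO' ιI'' ιO'' : P → Type*}
  (σI' : ∀ p, ιI' p → Matrix (I' p) (I' p) ℂ) (σO' : ∀ p, ιO' p → Matrix (O' p) (O' p) ℂ)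
  (σI'' : ∀ p, ιI'' p → Matrix (I'' p) (I'' p) ℂ) (σO'' : ∀ p, ιO'' p → Matrix (O'' p) (O'' p) ℂ)

theorem prodOp_hsTerm [Fintype P] (t : ∀ p, ιI' p × ιO' p) (s : ∀ p, ιI'' p × ιO'' p) :
    prodOp (hsTerm σI' σO' t) (hsTerm σI'' σO'' s) =
      hsTerm (fun p => prodBasis (σI' p) (σI'' p)) (fun p => prodBasis (σO' p) (σO'' p))
        (combineTerm t s) := by
  ext x y
  simp only [prodOp, hsTerm, prodBasis, combineTerm, kroneckerMap_apply, ← Finset.prod_mul_distrib]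
  exact Finset.prod_congr rfl fun p _ => mul_mul_mul_comm ..

def combineTermEquiv :
    (∀ p, ιI' p × ιO' p) × (∀ p, ιI'' p × ιO'' p) ≃ ∀ p, (ιI' p × ιI'' p) × (ιO' p × ιO'' p) where
  toFun ts := combineTerm ts.1 ts.2
  invFun u := (fun p => ((u p).1.1, (u p).2.1), fun p => ((u p).1.2, (u p).2.2))
  left_inv _ := rfl
  right_inv _ := rfl

variable [Fintype P] [DecidableEq P]
  [∀ p, Fintype (ιI' p)] [∀ p, Fintype (ιO' p)] [∀ p, Fintype (ιI'' p)] [∀ p, Fintype (ιO'' p)]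

theorem prodOp_expand (w : (∀ p, ιI' p × ιO' p) → ℝ) (z : (∀ p, ιI'' p × ιO'' p) → ℝ) :
    prodOp (expand σI' σO' w) (expand σI'' σO'' z) =
      expand (fun p => prodBasis (σI' p) (σI'' p)) (fun p => prodBasis (σO' p) (σO'' p))
        (prodCoeffs w z) := by
  rw [expand, expand, prodOp_sum_smul_sum, expand, ← combineTermEquiv.sum_comp,
    Fintype.sum_prod_type]
  refine Finset.sum_congr rfl fun t _ => Finset.sum_congr rfl fun s _ => ?_
  rw [prodOp_hsTerm]
  exact congrArg (· • _) (Complex.ofReal_mul _ _).symm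

variable {σI' σO' σI'' σO''} [∀ p, Zero (ιI' p)] [∀ p, Zero (ιO' p)] [∀ p, Zero (ιI'' p)]
  [∀ p, Zero (ιO'' p)] [∀ p, Fintype (I' p)] [∀ p, Fintype (O' p)]
  [∀ p, Fintype (I'' p)] [∀ p, Fintype (O'' p)]

theorem IsProcessWith.prodOp_of_ogCoeffs
    {W : Matrix ((p : P) → I' p × O' p) ((p : P) → I' p × O' p) ℂ}
    {Z : Matrix ((p : P) → I'' p × O'' p) ((p : P) → I'' p × O'' p) ℂ}
    {w : (∀ p, ιI' p × ιO' p) → ℝ} {z : (∀ p, ιI'' p × ιO'' p) → ℝ}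
    (hW : IsProcessWith σI' σO' W w) (hZ : IsProcessWith σI'' σO'' Z z)
    (hwz : OGCoeffs (prodCoeffs w z)) :
    IsProcessWith (fun p => prodBasis (σI' p) (σI'' p)) (fun p => prodBasis (σO' p) (σO'' p))
      (prodOp W Z) (prodCoeffs w z) := by
  obtain ⟨hWpsd, hWtr, rfl, -⟩ := hW
  obtain ⟨hZpsd, hZtr, rfl, -⟩ := hZ
  refine ⟨posSemidef_prodOp hWpsd hZpsd, ?_, prodOp_expand .., hwz⟩
  simp only [trace_prodOp, hWtr, hZtr, Fintype.card_prod, Nat.cast_mul, Finset.prod_mul_distrib]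

end ProductExpansion

section TermTypes

variable {P : Type*} {ιI ιO : P → Type*} [∀ p, Zero (ιI p)] [∀ p, Zero (ιO p)]
  {t : ∀ p, ιI p × ιO p} {p : P}

theorem TrivialAt.not_includesOutAt (h : TrivialAt t p) : ¬ IncludesOutAt t p :=
  fun h' => h' h.2

theorem inTypeAt_of_not_trivialAt (h : ¬ TrivialAt t p) (h' : ¬ IncludesOutAt t p) :
    InTypeAt t p := by
  rw [IncludesOutAt, not_not] at h'
  exact ⟨fun h1 => h ⟨h1, h'⟩, h'⟩

end TermTypes

section CombinedTermTypes

variable {P : Type*} {ιI' ιO' ιI'' ιO'' : P → Type*}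

theorem exists_combineTerm_eq (u : ∀ p, (ιI' p × ιI'' p) × (ιO' p × ιO'' p)) :
    ∃ (t : ∀ p, ιI' p × ιO' p) (s : ∀ p, ιI'' p × ιO'' p), combineTerm t s = u :=
  ⟨fun p => ((u p).1.1, (u p).2.1), fun p => ((u p).1.2, (u p).2.2), rfl⟩

variable [∀ p, Zero (ιI' p)] [∀ p, Zero (ιO' p)] [∀ p, Zero (ιI'' p)] [∀ p, Zero (ιO'' p)]
  {t : ∀ p, ιI' p × ιO' p} {s : ∀ p, ιI'' p × ιO'' p} {p : P}

theorem trivialAt_combineTerm_iff :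
    TrivialAt (combineTerm t s) p ↔ TrivialAt t p ∧ TrivialAt s p := by
  simp only [TrivialAt, combineTerm, Prod.mk_eq_zero]
  tauto

theorem nontrivialTerm_combineTerm_iff :
    NontrivialTerm (combineTerm t s) ↔ NontrivialTerm t ∨ NontrivialTerm s := by
  simp only [NontrivialTerm, trivialAt_combineTerm_iff, not_and_or, exists_or]

theorem InTypeAt.combineTerm_left (ht : InTypeAt t p) (hs : ¬ IncludesOutAt s p) :
    InTypeAt (combineTerm t s) p :=
  ⟨fun h => ht.1 (Prod.mk_eq_zero.1 h).1, Prod.mk_eq_zero.2 ⟨ht.2, not_not.1 hs⟩⟩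

theorem InTypeAt.combineTerm_right (ht : ¬ IncludesOutAt t p) (hs : InTypeAt s p) :
    InTypeAt (combineTerm t s) p :=
  ⟨fun h => hs.1 (Prod.mk_eq_zero.1 h).2, Prod.mk_eq_zero.2 ⟨not_not.1 ht, hs.2⟩⟩

section NotInType

variable (hno : ¬ InTypeAt (combineTerm t s) p)
include hno

theorem includesOutAt_right_of_inTypeAt_left (ht : InTypeAt t p) : IncludesOutAt s p := by
  by_contra hs
  exact hno (ht.combineTerm_left hs)

theorem includesOutAt_left_of_inTypeAt_right (hs : InTypeAt s p) : IncludesOutAt t p := by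
  by_contra ht
  exact hno (hs.combineTerm_right ht)

theorem trivialAt_or_includesOutAt_right_of_trivialAt_left (ht : TrivialAt t p) :
    TrivialAt s p ∨ IncludesOutAt s p := by
  by_contra! hs
  exact hno ((inTypeAt_of_not_trivialAt hs.1 hs.2).combineTerm_right ht.not_includesOutAt)

theorem trivialAt_or_includesOutAt_left_of_trivialAt_right (hs : TrivialAt s p) :
    TrivialAt t p ∨ IncludesOutAt t p := by
  by_contra! ht
  exact hno ((inTypeAt_of_not_trivialAt ht.1 ht.2).combineTerm_left hs.not_includesOutAt)

end NotInType

variable {w : (∀ p, ιI' p × ιO' p) → ℝ} {z : (∀ p, ιI'' p × ιO'' p) → ℝ}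
  (hts : NontrivialTerm (combineTerm t s)) (hno : ∀ p, ¬ InTypeAt (combineTerm t s) p)
include hts hno

theorem nontrivialTerm_left_of_combineTerm (hz : OGCoeffs z) (hs : z s ≠ 0) :
    NontrivialTerm t := by
  by_contra ht
  obtain ⟨p, hp⟩ := hz s hs ((nontrivialTerm_combineTerm_iff.1 hts).resolve_left ht)
  exact hno p (hp.combineTerm_right (not_exists_not.1 ht p).not_includesOutAt)

theorem nontrivialTerm_right_of_combineTerm (hw : OGCoeffs w) (ht : w t ≠ 0) :
    NontrivialTerm s := by
  by_contra hs
  obtain ⟨p, hp⟩ := hw t ht ((nontrivialTerm_combineTerm_iff.1 hts).resolve_right hs)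
  exact hno p (hp.combineTerm_left (not_exists_not.1 hs p).not_includesOutAt)

end CombinedTermTypes


variable {P : Type*} [Fintype P] [DecidableEq P]
  {I' O' I'' O'' : P → Type*}
  [∀ p, Fintype (I' p)] [∀ p, DecidableEq (I' p)]
  [∀ p, Fintype (O' p)] [∀ p, DecidableEq (O' p)]
  [∀ p, Fintype (I'' p)] [∀ p, DecidableEq (I'' p)]
  [∀ p, Fintype (O'' p)] [∀ p, DecidableEq (O'' p)]
  {ιI' ιO' ιI'' ιO'' : P → Type*}
  [∀ p, Fintype (ιI' p)] [∀ p, Zero (ιI' p)]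
  [∀ p, Fintype (ιO' p)] [∀ p, Zero (ιO' p)]
  [∀ p, Fintype (ιI'' p)] [∀ p, Zero (ιI'' p)]
  [∀ p, Fintype (ιO'' p)] [∀ p, Zero (ιO'' p)]

section Statement3

theorem statement3_general
    (σI' : ∀ p, ιI' p → Matrix (I' p) (I' p) ℂ)
    (σO' : ∀ p, ιO' p → Matrix (O' p) (O' p) ℂ)
    (σI'' : ∀ p, ιI'' p → Matrix (I'' p) (I'' p) ℂ)
    (σO'' : ∀ p, ιO'' p → Matrix (O'' p) (O'' p) ℂ)
    (W : Matrix ((p : P) → I' p × O' p) ((p : P) → I' p × O' p) ℂ)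
    (Z : Matrix ((p : P) → I'' p × O'' p) ((p : P) → I'' p × O'' p) ℂ)
    (w : (∀ p, ιI' p × ιO' p) → ℝ) (z : (∀ p, ιI'' p × ιO'' p) → ℝ)
    (hW : IsProcessWith σI' σO' W w) (hZ : IsProcessWith σI'' σO'' Z z)
    (hnot : ¬ IsProcess (fun p => prodBasis (σI' p) (σI'' p))
        (fun p => prodBasis (σO' p) (σO'' p)) (prodOp W Z)) :
    ∃ (t : ∀ p, ιI' p × ιO' p) (s : ∀ p, ιI'' p × ιO'' p),
      w t ≠ 0 ∧ z s ≠ 0 ∧ NontrivialTerm t ∧ NontrivialTerm s ∧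
      prodCoeffs w z (combineTerm t s) ≠ 0 ∧
      NontrivialTerm (combineTerm t s) ∧
      (∀ p, ¬ InTypeAt (combineTerm t s) p) ∧
      (∀ p, (TrivialAt t p → TrivialAt s p ∨ IncludesOutAt s p) ∧
            (TrivialAt s p → TrivialAt t p ∨ IncludesOutAt t p)) ∧
      (∀ p, (InTypeAt t p → IncludesOutAt s p) ∧
            (InTypeAt s p → IncludesOutAt t p)) := by
  have hwz : ¬ OGCoeffs (prodCoeffs w z) := fun h => hnot ⟨_, hW.prodOp_of_ogCoeffs hZ h⟩
  obtain ⟨u, hu, hunt, hno⟩ :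
      ∃ u, prodCoeffs w z u ≠ 0 ∧ NontrivialTerm u ∧ ∀ p, ¬ InTypeAt u p := by
    simpa [OGCoeffs] using hwz
  obtain ⟨t, s, rfl⟩ := exists_combineTerm_eq u
  obtain ⟨hwt, hzs⟩ : w t ≠ 0 ∧ z s ≠ 0 := mul_ne_zero_iff.1 hu
  refine ⟨t, s, hwt, hzs, nontrivialTerm_left_of_combineTerm hunt hno hZ.2.2.2 hzs,
    nontrivialTerm_right_of_combineTerm hunt hno hW.2.2.2 hwt, hu, hunt, hno,
    fun p => ⟨?_, ?_⟩, fun p => ⟨?_, ?_⟩⟩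
  exacts [trivialAt_or_includesOutAt_right_of_trivialAt_left (hno p),
    trivialAt_or_includesOutAt_left_of_trivialAt_right (hno p),
    includesOutAt_right_of_inTypeAt_left (hno p), includesOutAt_left_of_inTypeAt_right (hno p)]

/-- **Necessity direction of the product condition.** Let `W` and `Z` be processes on
parties `A', B', …` and `A'', B'', …` respectively (with Hilbert–Schmidt coefficients
`w` and `z`) and suppose `P = W ⊗ Z` is not a valid process for the combined parties.
Then `P` contains a nonzero nontrivial Hilbert–Schmidt term that is in type on no
combined party; this term is the tensor product of a nonzero nontrivial term `t` of
`W` and a nonzero nontrivial term `s` of `Z`, and this pair of terms satisfies: on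
every combined party where one term is trivial, the other is trivial or includes the
out type; and on every combined party where one term is the in type, the other
includes the out type. -/
theorem statement3
    (σI' : ∀ p, ιI' p → Matrix (I' p) (I' p) ℂ)
    (σO' : ∀ p, ιO' p → Matrix (O' p) (O' p) ℂ)
    (σI'' : ∀ p, ιI'' p → Matrix (I'' p) (I'' p) ℂ)
    (σO'' : ∀ p, ιO'' p → Matrix (O'' p) (O'' p) ℂ)
    (hσI' : ∀ p, IsHSBasis (σI' p)) (hσO' : ∀ p, IsHSBasis (σO' p))
    (hσI'' : ∀ p, IsHSBasis (σI'' p)) (hσO'' : ∀ p, IsHSBasis (σO'' p))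
    (W : Matrix ((p : P) → I' p × O' p) ((p : P) → I' p × O' p) ℂ)
    (Z : Matrix ((p : P) → I'' p × O'' p) ((p : P) → I'' p × O'' p) ℂ)
    (w : (∀ p, ιI' p × ιO' p) → ℝ) (z : (∀ p, ιI'' p × ιO'' p) → ℝ)
    (hW : IsProcessWith σI' σO' W w) (hZ : IsProcessWith σI'' σO'' Z z)
    (hnot : ¬ IsProcess (fun p => prodBasis (σI' p) (σI'' p))
        (fun p => prodBasis (σO' p) (σO'' p)) (prodOp W Z)) :
    ∃ (t : ∀ p, ιI' p × ιO' p) (s : ∀ p, ιI'' p × ιO'' p),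
      w t ≠ 0 ∧ z s ≠ 0 ∧ NontrivialTerm t ∧ NontrivialTerm s ∧
      prodCoeffs w z (combineTerm t s) ≠ 0 ∧
      NontrivialTerm (combineTerm t s) ∧
      (∀ p, ¬ InTypeAt (combineTerm t s) p) ∧
      (∀ p, (TrivialAt t p → TrivialAt s p ∨ IncludesOutAt s p) ∧
            (TrivialAt s p → TrivialAt t p ∨ IncludesOutAt t p)) ∧
      (∀ p, (InTypeAt t p → IncludesOutAt s p) ∧
            (InTypeAt s p → IncludesOutAt t p)) :=
  statement3_general σI' σO' σI'' σO'' W Z w z hW hZ hnot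

end Statement3

end ProcessPaper
end

section
/- (Sufficiency direction of the two-party corollary.) Let W and Z be two-party processes such that W contains a nonzero A-to-B signalling term and Z contains a nonzero B-to-A signalling term (or vice versa). Then this pair of terms satisfies: neither term is trivial on either party, on every combined party where one term is the in type the other includes the out type, and hence P = W ⊗ Z is not a valid process for the combined parties. -/
open Matrix Kronecker BigOperators
open scoped ComplexOrder

namespace ProcessPaper

variable {P : Type*} [Fintype P] [DecidableEq P]

variable {I' O' I'' O'' : Fin 2 → Type*}
  [∀ p, Fintype (I' p)] [∀ p, DecidableEq (I' p)]
  [∀ p, Fintype (O' p)] [∀ p, DecidableEq (O' p)]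
  [∀ p, Fintype (I'' p)] [∀ p, DecidableEq (I'' p)]
  [∀ p, Fintype (O'' p)] [∀ p, DecidableEq (O'' p)]
  {ιI' ιO' ιI'' ιO'' : Fin 2 → Type*}
  [∀ p, Fintype (ιI' p)] [∀ p, Zero (ιI' p)]
  [∀ p, Fintype (ιO' p)] [∀ p, Zero (ιO' p)]
  [∀ p, Fintype (ιI'' p)] [∀ p, Zero (ιI'' p)]
  [∀ p, Fintype (ιO'' p)] [∀ p, Zero (ιO'' p)]


section Aux
set_option maxHeartbeats 1000000
set_option linter.unusedSectionVars false

-- Fubini for pi types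
lemma sum_pi_prod {P : Type*} [Fintype P] [DecidableEq P] {X : P → Type*}
    [∀ p, Fintype (X p)] (f : ∀ p, X p → ℂ) :
    ∑ x : ∀ p, X p, ∏ p, f p (x p) = ∏ p, ∑ a, f p a :=
  (Fintype.prod_sum f).symm

lemma sum_sum_pi_prod {P : Type*} [Fintype P] [DecidableEq P] {X Y : P → Type*}
    [∀ p, Fintype (X p)] [∀ p, Fintype (Y p)] (g : ∀ p, X p → Y p → ℂ) :
    ∑ x : ∀ p, X p, ∑ y : ∀ p, Y p, ∏ p, g p (x p) (y p) = ∏ p, ∑ a, ∑ b, g p a b := by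
  calc ∑ x : ∀ p, X p, ∑ y : ∀ p, Y p, ∏ p, g p (x p) (y p)
      = ∑ x : ∀ p, X p, ∏ p, ∑ b, g p (x p) b :=
        Finset.sum_congr rfl fun x _ => sum_pi_prod (fun p b => g p (x p) b)
    _ = ∏ p, ∑ a, ∑ b, g p a b := sum_pi_prod (fun p a => ∑ b, g p a b)

lemma trace_sq_ne_zero {n : Type*} [Fintype n] {σ : Matrix n n ℂ}
    (h : σ.IsHermitian) (h0 : σ ≠ 0) : (σ * σ).trace ≠ 0 := by
  have key : (σ * σ).trace = ((∑ i, ∑ j, Complex.normSq (σ j i) : ℝ) : ℂ) := by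
    simp only [Matrix.trace, Matrix.diag, Matrix.mul_apply]
    push_cast
    refine Finset.sum_congr rfl fun i _ => Finset.sum_congr rfl fun j _ => ?_
    rw [← h.apply i j]
    simp [Matrix.conjTranspose_apply, Complex.normSq_eq_conj_mul_self]
  rw [key]
  norm_cast
  intro hz
  apply h0
  have hnn : ∀ i ∈ (Finset.univ : Finset n), (0:ℝ) ≤ ∑ j, Complex.normSq (σ j i) :=
    fun i _ => Finset.sum_nonneg fun j _ => Complex.normSq_nonneg _
  ext j i
  have h1 := (Finset.sum_eq_zero_iff_of_nonneg hnn).mp hz i (Finset.mem_univ i)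
  have h2 := (Finset.sum_eq_zero_iff_of_nonneg
    (fun j _ => Complex.normSq_nonneg (σ j i))).mp h1 j (Finset.mem_univ j)
  simpa using Complex.normSq_eq_zero.mp h2

variable {Q : Type*} [Fintype Q] [DecidableEq Q]
  {I O : Q → Type*} [∀ p, Fintype (I p)] [∀ p, DecidableEq (I p)]
  [∀ p, Fintype (O p)] [∀ p, DecidableEq (O p)]
  {ιI ιO : Q → Type*} [∀ p, Fintype (ιI p)] [∀ p, Zero (ιI p)]
  [∀ p, Fintype (ιO p)] [∀ p, Zero (ιO p)]

lemma sum_prod_mul {α β : Type*} [Fintype α] [Fintype β] (f : α → ℂ) (g : β → ℂ) :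
    ∑ a : α × β, f a.1 * g a.2 = (∑ x, f x) * (∑ y, g y) := by
  rw [Fintype.sum_prod_type, Fintype.sum_mul_sum]

lemma trace_hsTerm_mul (σI : ∀ p, ιI p → Matrix (I p) (I p) ℂ)
    (σO : ∀ p, ιO p → Matrix (O p) (O p) ℂ) (t v : ∀ p, ιI p × ιO p) :
    (hsTerm σI σO t * hsTerm σI σO v).trace =
      ∏ p, ((σI p (t p).1 * σI p (v p).1).trace *
            (σO p (t p).2 * σO p (v p).2).trace) := by
  have step1 : (hsTerm σI σO t * hsTerm σI σO v).trace =
      ∑ x : ∀ p, I p × O p, ∑ y : ∀ p, I p × O p, ∏ p,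
        (σI p (t p).1 (x p).1 (y p).1 * σO p (t p).2 (x p).2 (y p).2 *
         (σI p (v p).1 (y p).1 (x p).1 * σO p (v p).2 (y p).2 (x p).2)) := by
    simp only [Matrix.trace, Matrix.diag, Matrix.mul_apply, hsTerm,
      ← Finset.prod_mul_distrib]
  rw [step1]
  refine (sum_sum_pi_prod (X := fun p => I p × O p) (Y := fun p => I p × O p)
    (fun p a b => σI p (t p).1 a.1 b.1 * σO p (t p).2 a.2 b.2 *
      (σI p (v p).1 b.1 a.1 * σO p (v p).2 b.2 a.2))).trans ?_
  refine Finset.prod_congr rfl fun p _ => ?_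
  have : ((σI p (t p).1 * σI p (v p).1).trace * (σO p (t p).2 * σO p (v p).2).trace)
      = (∑ a1 : I p, ∑ b1 : I p, σI p (t p).1 a1 b1 * σI p (v p).1 b1 a1) *
        (∑ a2 : O p, ∑ b2 : O p, σO p (t p).2 a2 b2 * σO p (v p).2 b2 a2) := by
    simp [Matrix.trace, Matrix.diag, Matrix.mul_apply]
  rw [this]
  calc ∑ a : I p × O p, ∑ b : I p × O p,
        (σI p (t p).1 a.1 b.1 * σO p (t p).2 a.2 b.2 *
          (σI p (v p).1 b.1 a.1 * σO p (v p).2 b.2 a.2))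
      = ∑ a : I p × O p, (∑ b1, σI p (t p).1 a.1 b1 * σI p (v p).1 b1 a.1) *
          (∑ b2, σO p (t p).2 a.2 b2 * σO p (v p).2 b2 a.2) := by
        refine Finset.sum_congr rfl fun a _ => ?_
        rw [← sum_prod_mul (fun b1 => σI p (t p).1 a.1 b1 * σI p (v p).1 b1 a.1)
          (fun b2 => σO p (t p).2 a.2 b2 * σO p (v p).2 b2 a.2)]
        exact Finset.sum_congr rfl fun b _ => by ring
    _ = (∑ a1, ∑ b1, σI p (t p).1 a1 b1 * σI p (v p).1 b1 a1) *
          (∑ a2, ∑ b2, σO p (t p).2 a2 b2 * σO p (v p).2 b2 a2) :=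
        sum_prod_mul (fun a1 => ∑ b1, σI p (t p).1 a1 b1 * σI p (v p).1 b1 a1)
          (fun a2 => ∑ b2, σO p (t p).2 a2 b2 * σO p (v p).2 b2 a2)

lemma trace_expand_mul (σI : ∀ p, ιI p → Matrix (I p) (I p) ℂ)
    (σO : ∀ p, ιO p → Matrix (O p) (O p) ℂ)
    (hI : ∀ p, ∀ i j, i ≠ j → (σI p i * σI p j).trace = 0)
    (hO : ∀ p, ∀ i j, i ≠ j → (σO p i * σO p j).trace = 0)
    (w : (∀ p, ιI p × ιO p) → ℝ) (v : ∀ p, ιI p × ιO p) :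
    (expand σI σO w * hsTerm σI σO v).trace =
      (w v : ℂ) * ∏ p, ((σI p (v p).1 * σI p (v p).1).trace *
        (σO p (v p).2 * σO p (v p).2).trace) := by
  rw [expand, Finset.sum_mul]
  simp only [smul_mul_assoc]
  rw [Matrix.trace_sum]
  simp only [Matrix.trace_smul, trace_hsTerm_mul]
  rw [Finset.sum_eq_single v]
  · rw [smul_eq_mul]
  · intro t _ hne
    have hex : ∃ p, t p ≠ v p := by
      by_contra h
      push_neg at h
      exact hne (funext h)
    obtain ⟨p, hp⟩ := hex
    have hfac : (σI p (t p).1 * σI p (v p).1).trace *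
        (σO p (t p).2 * σO p (v p).2).trace = 0 := by
      by_cases h1 : (t p).1 = (v p).1
      · have h2 : (t p).2 ≠ (v p).2 := fun h2 => hp (Prod.ext h1 h2)
        rw [hO p _ _ h2, mul_zero]
      · rw [hI p _ _ h1, zero_mul]
    rw [Finset.prod_eq_zero (Finset.mem_univ p) hfac, smul_zero]
  · intro h
    exact absurd (Finset.mem_univ v) h

/-- reindexing equivalence for combined systems -/
def splitEquiv (I' O' I'' O'' : Q → Type*) :
    ((∀ p, I' p × O' p) × (∀ p, I'' p × O'' p)) ≃
      (∀ p, (I' p × I'' p) × (O' p × O'' p)) where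
  toFun := fun fg p => (((fg.1 p).1, (fg.2 p).1), ((fg.1 p).2, (fg.2 p).2))
  invFun := fun x => (fun p => ((x p).1.1, (x p).2.1), fun p => ((x p).1.2, (x p).2.2))
  left_inv := fun fg => rfl
  right_inv := fun x => rfl

lemma trace_prodOp_mul
    {I' O' I'' O'' : Q → Type*}
    [∀ p, Fintype (I' p)] [∀ p, Fintype (O' p)]
    [∀ p, Fintype (I'' p)] [∀ p, Fintype (O'' p)]
    {ιI' ιO' ιI'' ιO'' : Q → Type*}
    (σI' : ∀ p, ιI' p → Matrix (I' p) (I' p) ℂ)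
    (σO' : ∀ p, ιO' p → Matrix (O' p) (O' p) ℂ)
    (σI'' : ∀ p, ιI'' p → Matrix (I'' p) (I'' p) ℂ)
    (σO'' : ∀ p, ιO'' p → Matrix (O'' p) (O'' p) ℂ)
    (W : Matrix ((p : Q) → I' p × O' p) ((p : Q) → I' p × O' p) ℂ)
    (Z : Matrix ((p : Q) → I'' p × O'' p) ((p : Q) → I'' p × O'' p) ℂ)
    (t : ∀ p, ιI' p × ιO' p) (s : ∀ p, ιI'' p × ιO'' p) :
    (prodOp W Z * hsTerm (fun p => prodBasis (σI' p) (σI'' p))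
        (fun p => prodBasis (σO' p) (σO'' p)) (combineTerm t s)).trace =
      (W * hsTerm σI' σO' t).trace * (Z * hsTerm σI'' σO'' s).trace := by
  classical
  set e := splitEquiv I' O' I'' O'' with he
  set G : (∀ p, (I' p × I'' p) × (O' p × O'' p)) → (∀ p, (I' p × I'' p) × (O' p × O'' p)) → ℂ :=
    fun x y =>
      (W (fun p => ((x p).1.1, (x p).2.1)) (fun p => ((y p).1.1, (y p).2.1)) *
        hsTerm σI' σO' t (fun p => ((y p).1.1, (y p).2.1)) (fun p => ((x p).1.1, (x p).2.1))) *
      (Z (fun p => ((x p).1.2, (x p).2.2)) (fun p => ((y p).1.2, (y p).2.2)) *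
        hsTerm σI'' σO'' s (fun p => ((y p).1.2, (y p).2.2)) (fun p => ((x p).1.2, (x p).2.2)))
    with hG
  have reidx : ∀ (F : (∀ p, (I' p × I'' p) × (O' p × O'' p)) → ℂ),
      ∑ x, F x = ∑ a : ∀ p, I' p × O' p, ∑ b : ∀ p, I'' p × O'' p, F (e (a, b)) := by
    intro F
    rw [← Equiv.sum_comp e F, Fintype.sum_prod_type]
  have hterm : ∀ x y, prodOp W Z x y * hsTerm (fun p => prodBasis (σI' p) (σI'' p))
      (fun p => prodBasis (σO' p) (σO'' p)) (combineTerm t s) y x = G x y := by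
    intro x y
    simp only [hG, prodOp, hsTerm, combineTerm, prodBasis, Matrix.kroneckerMap_apply,
      ← Finset.prod_mul_distrib]
    have hp : ∏ p, (σI' p (t p).1 (y p).1.1 (x p).1.1 * σI'' p (s p).1 (y p).1.2 (x p).1.2 *
          (σO' p (t p).2 (y p).2.1 (x p).2.1 * σO'' p (s p).2 (y p).2.2 (x p).2.2)) =
        (∏ p, σI' p (t p).1 (y p).1.1 (x p).1.1 * σO' p (t p).2 (y p).2.1 (x p).2.1) *
        ∏ p, σI'' p (s p).1 (y p).1.2 (x p).1.2 * σO'' p (s p).2 (y p).2.2 (x p).2.2 := by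
      rw [← Finset.prod_mul_distrib]
      exact Finset.prod_congr rfl fun p _ => by ring
    rw [hp]
    ring
  have step1 : (prodOp W Z * hsTerm (fun p => prodBasis (σI' p) (σI'' p))
      (fun p => prodBasis (σO' p) (σO'' p)) (combineTerm t s)).trace = ∑ x, ∑ y, G x y := by
    simp only [Matrix.trace, Matrix.diag, Matrix.mul_apply]
    exact Finset.sum_congr rfl fun x _ => Finset.sum_congr rfl fun y _ => hterm x y
  have key : ∀ a b c d, G (e (a, b)) (e (c, d)) =
      (W a c * hsTerm σI' σO' t c a) * (Z b d * hsTerm σI'' σO'' s d b) := fun a b c d => rfl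
  calc (prodOp W Z * hsTerm (fun p => prodBasis (σI' p) (σI'' p))
        (fun p => prodBasis (σO' p) (σO'' p)) (combineTerm t s)).trace
      = ∑ x, ∑ y, G x y := step1
    _ = ∑ a : ∀ p, I' p × O' p, ∑ b : ∀ p, I'' p × O'' p, ∑ y, G (e (a, b)) y :=
        reidx (fun x => ∑ y, G x y)
    _ = ∑ a : ∀ p, I' p × O' p, ∑ b : ∀ p, I'' p × O'' p, ∑ c : ∀ p, I' p × O' p,
          ∑ d : ∀ p, I'' p × O'' p, G (e (a, b)) (e (c, d)) := by
        refine Finset.sum_congr rfl fun a _ => Finset.sum_congr rfl fun b _ => ?_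
        exact reidx (fun y => G (e (a, b)) y)
    _ = ∑ a : ∀ p, I' p × O' p, ∑ b : ∀ p, I'' p × O'' p,
          (∑ c, W a c * hsTerm σI' σO' t c a) * (∑ d, Z b d * hsTerm σI'' σO'' s d b) := by
        refine Finset.sum_congr rfl fun a _ => Finset.sum_congr rfl fun b _ => ?_
        rw [Fintype.sum_mul_sum]
        exact Finset.sum_congr rfl fun c _ => Finset.sum_congr rfl fun d _ => key a b c d
    _ = (∑ a, ∑ c, W a c * hsTerm σI' σO' t c a) *
          (∑ b, ∑ d, Z b d * hsTerm σI'' σO'' s d b) := by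
        rw [Fintype.sum_mul_sum]
    _ = (W * hsTerm σI' σO' t).trace * (Z * hsTerm σI'' σO'' s).trace := by
        simp [Matrix.trace, Matrix.diag, Matrix.mul_apply]

end Aux

section Statement6
set_option maxHeartbeats 1000000

/-- **Sufficiency direction of the two-party corollary.** Let `W` and `Z` be two-party
processes (with Hilbert–Schmidt coefficients `w`, `z`; party `0` is the `A`-type party
and party `1` the `B`-type party) such that `W` contains a nonzero `A`-to-`B`
signalling term `t` and `Z` contains a nonzero `B`-to-`A` signalling term `s` (or vice
versa). Then this pair of terms satisfies: neither term is trivial on either party,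
on every combined party where one term is the in type the other includes the out
type, and hence `P = W ⊗ Z` is not a valid process for the combined parties. -/
theorem statement6
    (σI' : ∀ p, ιI' p → Matrix (I' p) (I' p) ℂ)
    (σO' : ∀ p, ιO' p → Matrix (O' p) (O' p) ℂ)
    (σI'' : ∀ p, ιI'' p → Matrix (I'' p) (I'' p) ℂ)
    (σO'' : ∀ p, ιO'' p → Matrix (O'' p) (O'' p) ℂ)
    (hσI' : ∀ p, IsHSBasis (σI' p)) (hσO' : ∀ p, IsHSBasis (σO' p))
    (hσI'' : ∀ p, IsHSBasis (σI'' p)) (hσO'' : ∀ p, IsHSBasis (σO'' p))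
    (W : Matrix ((p : Fin 2) → I' p × O' p) ((p : Fin 2) → I' p × O' p) ℂ)
    (Z : Matrix ((p : Fin 2) → I'' p × O'' p) ((p : Fin 2) → I'' p × O'' p) ℂ)
    (w : (∀ p, ιI' p × ιO' p) → ℝ) (z : (∀ p, ιI'' p × ιO'' p) → ℝ)
    (hW : IsProcessWith σI' σO' W w) (hZ : IsProcessWith σI'' σO'' Z z)
    (t : ∀ p, ιI' p × ιO' p) (s : ∀ p, ιI'' p × ιO'' p)
    (ht : w t ≠ 0) (hs : z s ≠ 0)
    (hsig : (AtoBSig t ∧ BtoASig s) ∨ (BtoASig t ∧ AtoBSig s)) :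
    (∀ p, ¬ TrivialAt t p) ∧ (∀ p, ¬ TrivialAt s p) ∧
    (∀ p, (InTypeAt t p → IncludesOutAt s p) ∧
          (InTypeAt s p → IncludesOutAt t p)) ∧
    ¬ IsProcess (fun p => prodBasis (σI' p) (σI'' p))
        (fun p => prodBasis (σO' p) (σO'' p)) (prodOp W Z) := by
  obtain ⟨hWpsd, hWtr, hWexp, hWog⟩ := hW
  obtain ⟨hZpsd, hZtr, hZexp, hZog⟩ := hZ
  have horthI' : ∀ p, ∀ i j, i ≠ j → (σI' p i * σI' p j).trace = 0 :=
    fun p => (hσI' p).2.2.2.2.1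
  have horthO' : ∀ p, ∀ i j, i ≠ j → (σO' p i * σO' p j).trace = 0 :=
    fun p => (hσO' p).2.2.2.2.1
  have horthI'' : ∀ p, ∀ i j, i ≠ j → (σI'' p i * σI'' p j).trace = 0 :=
    fun p => (hσI'' p).2.2.2.2.1
  have horthO'' : ∀ p, ∀ i j, i ≠ j → (σO'' p i * σO'' p j).trace = 0 :=
    fun p => (hσO'' p).2.2.2.2.1
  have hsqI' : ∀ p i, (σI' p i * σI' p i).trace ≠ 0 :=
    fun p i => trace_sq_ne_zero ((hσI' p).2.1 i) ((hσI' p).2.2.2.2.2 i)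
  have hsqO' : ∀ p i, (σO' p i * σO' p i).trace ≠ 0 :=
    fun p i => trace_sq_ne_zero ((hσO' p).2.1 i) ((hσO' p).2.2.2.2.2 i)
  have hsqI'' : ∀ p i, (σI'' p i * σI'' p i).trace ≠ 0 :=
    fun p i => trace_sq_ne_zero ((hσI'' p).2.1 i) ((hσI'' p).2.2.2.2.2 i)
  have hsqO'' : ∀ p i, (σO'' p i * σO'' p i).trace ≠ 0 :=
    fun p i => trace_sq_ne_zero ((hσO'' p).2.1 i) ((hσO'' p).2.2.2.2.2 i)
  refine ⟨?_, ?_, ?_, ?_⟩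
  · intro p
    rcases hsig with ⟨⟨h1, h2, h3⟩, _⟩ | ⟨⟨h1, h2, h3⟩, _⟩ <;> fin_cases p <;>
      simp only [TrivialAt, not_and] <;> tauto
  · intro p
    rcases hsig with ⟨_, ⟨h1, h2, h3⟩⟩ | ⟨_, ⟨h1, h2, h3⟩⟩ <;> fin_cases p <;>
      simp only [TrivialAt, not_and] <;> tauto
  · intro p
    rcases hsig with ⟨⟨h1, h2, h3⟩, ⟨h4, h5, h6⟩⟩ | ⟨⟨h1, h2, h3⟩, ⟨h4, h5, h6⟩⟩ <;>
      fin_cases p <;>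
      simp only [InTypeAt, IncludesOutAt] <;>
      constructor <;> tauto
  · rintro ⟨u, hupsd, hutr, huexp, huog⟩
    set v := combineTerm t s with hv
    -- orthogonality for the combined bases
    have horthIc : ∀ p, ∀ i j : ιI' p × ιI'' p, i ≠ j →
        (prodBasis (σI' p) (σI'' p) i * prodBasis (σI' p) (σI'' p) j).trace = 0 := by
      intro p i j hij
      rw [prodBasis, prodBasis, ← Matrix.mul_kronecker_mul, Matrix.trace_kronecker]
      by_cases h1 : i.1 = j.1
      · have h2 : i.2 ≠ j.2 := fun h2 => hij (Prod.ext h1 h2)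
        rw [horthI'' p _ _ h2, mul_zero]
      · rw [horthI' p _ _ h1, zero_mul]
    have horthOc : ∀ p, ∀ i j : ιO' p × ιO'' p, i ≠ j →
        (prodBasis (σO' p) (σO'' p) i * prodBasis (σO' p) (σO'' p) j).trace = 0 := by
      intro p i j hij
      rw [prodBasis, prodBasis, ← Matrix.mul_kronecker_mul, Matrix.trace_kronecker]
      by_cases h1 : i.1 = j.1
      · have h2 : i.2 ≠ j.2 := fun h2 => hij (Prod.ext h1 h2)
        rw [horthO'' p _ _ h2, mul_zero]
      · rw [horthO' p _ _ h1, zero_mul]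
    -- trace computations
    have e1 : (prodOp W Z * hsTerm (fun p => prodBasis (σI' p) (σI'' p))
        (fun p => prodBasis (σO' p) (σO'' p)) v).trace =
        (W * hsTerm σI' σO' t).trace * (Z * hsTerm σI'' σO'' s).trace :=
      trace_prodOp_mul σI' σO' σI'' σO'' W Z t s
    have e2 : (W * hsTerm σI' σO' t).trace =
        (w t : ℂ) * ∏ p, ((σI' p (t p).1 * σI' p (t p).1).trace *
          (σO' p (t p).2 * σO' p (t p).2).trace) := by
      rw [hWexp]; exact trace_expand_mul σI' σO' horthI' horthO' w t
    have e3 : (Z * hsTerm σI'' σO'' s).trace =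
        (z s : ℂ) * ∏ p, ((σI'' p (s p).1 * σI'' p (s p).1).trace *
          (σO'' p (s p).2 * σO'' p (s p).2).trace) := by
      rw [hZexp]; exact trace_expand_mul σI'' σO'' horthI'' horthO'' z s
    have e4 : (prodOp W Z * hsTerm (fun p => prodBasis (σI' p) (σI'' p))
        (fun p => prodBasis (σO' p) (σO'' p)) v).trace =
        (u v : ℂ) * ∏ p, ((prodBasis (σI' p) (σI'' p) (v p).1 *
            prodBasis (σI' p) (σI'' p) (v p).1).trace *
          (prodBasis (σO' p) (σO'' p) (v p).2 * prodBasis (σO' p) (σO'' p) (v p).2).trace) := by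
      rw [huexp]
      exact trace_expand_mul _ _ horthIc horthOc u v
    -- nonvanishing
    have hN' : (∏ p, ((σI' p (t p).1 * σI' p (t p).1).trace *
        (σO' p (t p).2 * σO' p (t p).2).trace)) ≠ 0 :=
      Finset.prod_ne_zero_iff.mpr fun p _ => mul_ne_zero (hsqI' p _) (hsqO' p _)
    have hN'' : (∏ p, ((σI'' p (s p).1 * σI'' p (s p).1).trace *
        (σO'' p (s p).2 * σO'' p (s p).2).trace)) ≠ 0 :=
      Finset.prod_ne_zero_iff.mpr fun p _ => mul_ne_zero (hsqI'' p _) (hsqO'' p _)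
    have hNc : (∏ p, ((prodBasis (σI' p) (σI'' p) (v p).1 *
          prodBasis (σI' p) (σI'' p) (v p).1).trace *
        (prodBasis (σO' p) (σO'' p) (v p).2 * prodBasis (σO' p) (σO'' p) (v p).2).trace)) ≠ 0 := by
      refine Finset.prod_ne_zero_iff.mpr fun p _ => mul_ne_zero ?_ ?_ <;>
        rw [prodBasis, ← Matrix.mul_kronecker_mul, Matrix.trace_kronecker]
      · exact mul_ne_zero (hsqI' p _) (hsqI'' p _)
      · exact mul_ne_zero (hsqO' p _) (hsqO'' p _)
    have hkey : (u v : ℂ) * ∏ p, ((prodBasis (σI' p) (σI'' p) (v p).1 *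
          prodBasis (σI' p) (σI'' p) (v p).1).trace *
        (prodBasis (σO' p) (σO'' p) (v p).2 * prodBasis (σO' p) (σO'' p) (v p).2).trace) ≠ 0 := by
      rw [← e4, e1, e2, e3]
      exact mul_ne_zero (mul_ne_zero (Complex.ofReal_ne_zero.mpr ht) hN')
        (mul_ne_zero (Complex.ofReal_ne_zero.mpr hs) hN'')
    have huv : u v ≠ 0 := by
      intro h0
      rw [h0] at hkey
      simp at hkey
    -- v is nontrivial
    have hnt : NontrivialTerm v := by
      rcases hsig with ⟨⟨h1, h2, h3⟩, _⟩ | ⟨⟨h1, h2, h3⟩, _⟩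
      · refine ⟨1, fun htr => h2 ?_⟩
        have h := htr.1
        rw [hv] at h
        rw [Prod.mk_eq_zero] at h
        exact h.1
      · refine ⟨1, fun htr => h1 ?_⟩
        have h := htr.2
        rw [hv] at h
        rw [Prod.mk_eq_zero] at h
        exact h.1
    obtain ⟨p, hin1, hin2⟩ := huog v huv hnt
    have hout : (t p).2 = 0 ∧ (s p).2 = 0 := by
      rw [hv] at hin2
      rw [Prod.mk_eq_zero] at hin2
      exact hin2
    rcases hsig with ⟨⟨h1, h2, h3⟩, ⟨h4, h5, h6⟩⟩ | ⟨⟨h1, h2, h3⟩, ⟨h4, h5, h6⟩⟩ <;>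
      fin_cases p <;> tauto

end Statement6

end ProcessPaper
end
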